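/- Let S = ℝ[x] (realized as AddMonoidAlgebra ℝ ℕ) be graded by D = ℤ/2ℤ via the parity of the exponent, so S = S_0̄ ⊕ S_1̄ where S_ī is spanned by the monomials x^m with m ≡ i (mod 2). Then the principal ideal 𝔭 = (x² − 1) is a homogeneous ideal which is D-prime (for all homogeneous f, g ∈ S with fg ∈ 𝔭, either f ∈ 𝔭 or g ∈ 𝔭), but 𝔭 is not a prime ideal of S. -/

import Mathlib

/-!
A homogeneous element for the parity grading is an even or an odd polynomial, so it vanishes
at `1` if and only if it vanishes at `-1`. As `x² - 1 = (x - 1)(x + 1)` with coprime factors,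
divisibility by `x² - 1` means vanishing at both `±1`; if `x² - 1 ∣ fg` then `f` or `g` vanishes
at `1`, hence at `±1`. The non-homogeneous factors `x ∓ 1` witness that `(x² - 1)` is not prime.
-/

open Polynomial

namespace Polynomial

variable {R : Type*} [CommRing R]

theorem eval_neg_of_forall_mem_support_cast_eq (p : R[X]) {d : ZMod 2}
    (hp : ∀ n ∈ p.support, (n : ZMod 2) = d) (x : R) :
    p.eval (-x) = (-1) ^ d.val * p.eval x := by
  rw [eval_eq_sum, eval_eq_sum, sum_def, sum_def, Finset.mul_sum]
  refine Finset.sum_congr rfl fun n hn => ?_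
  rw [neg_pow, neg_one_pow_eq_pow_mod_two, ← ZMod.val_natCast, hp n hn]
  ring

theorem isRoot_neg_iff_of_forall_mem_support_cast_eq {p : R[X]} {d : ZMod 2}
    (hp : ∀ n ∈ p.support, (n : ZMod 2) = d) (x : R) :
    p.IsRoot (-x) ↔ p.IsRoot x := by
  rw [IsRoot.def, IsRoot.def, eval_neg_of_forall_mem_support_cast_eq p hp,
    ((isUnit_neg_one (α := R)).pow _).mul_right_eq_zero]

theorem X_sq_sub_one_dvd_iff (h2 : IsUnit (2 : R)) (p : R[X]) :
    X ^ 2 - 1 ∣ p ↔ p.IsRoot 1 ∧ p.IsRoot (-1) := by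
  have hfac : (X ^ 2 - 1 : R[X]) = (X - C 1) * (X - C (-1)) := by
    rw [map_neg, map_one]; ring
  have hcop : IsCoprime (X - C (1 : R)) (X - C (-1)) :=
    isCoprime_X_sub_C_of_isUnit_sub (by rwa [sub_neg_eq_add, one_add_one_eq_two])
  rw [hfac, ← dvd_iff_isRoot, ← dvd_iff_isRoot]
  exact ⟨fun h => ⟨dvd_of_mul_right_dvd h, dvd_of_mul_left_dvd h⟩,
    fun ⟨h1, h2⟩ => hcop.mul_dvd h1 h2⟩

theorem X_sq_sub_one_dvd_or_of_dvd_mul [IsDomain R] (h2 : IsUnit (2 : R)) {p q : R[X]}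
    (hp : p.IsRoot (-1) ↔ p.IsRoot 1) (hq : q.IsRoot (-1) ↔ q.IsRoot 1)
    (hpq : X ^ 2 - 1 ∣ p * q) : X ^ 2 - 1 ∣ p ∨ X ^ 2 - 1 ∣ q := by
  simp only [X_sq_sub_one_dvd_iff h2, hp, hq, and_self] at hpq ⊢
  simpa [IsRoot.def] using hpq.1

end Polynomial

theorem AddMonoidAlgebra.isRoot_neg_iff_of_isHomogeneousElem {R : Type*} [CommRing R]
    {f : AddMonoidAlgebra R ℕ}
    (hf : SetLike.IsHomogeneousElem (gradeBy R (Nat.castAddMonoidHom (ZMod 2))) f) (x : R) :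
    ((toFinsuppIso R).symm f).IsRoot (-x) ↔ ((toFinsuppIso R).symm f).IsRoot x := by
  obtain ⟨d, hd⟩ := hf
  refine isRoot_neg_iff_of_forall_mem_support_cast_eq (d := d) (fun n hn => ?_) x
  rw [toFinsuppIso_symm_apply, support_ofFinsupp] at hn
  exact (mem_gradeBy_iff _ _ _ _).mp hd hn

theorem stmt_2 :
    let 𝒜 := AddMonoidAlgebra.gradeBy ℝ (Nat.castAddMonoidHom (ZMod 2))
    let x : AddMonoidAlgebra ℝ ℕ := AddMonoidAlgebra.single 1 1
    let 𝔭 : Ideal (AddMonoidAlgebra ℝ ℕ) := Ideal.span {x * x - 1}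
    𝔭 ≠ ⊤ ∧ 𝔭.IsHomogeneous 𝒜 ∧
      (∀ f g : AddMonoidAlgebra ℝ ℕ, SetLike.IsHomogeneousElem 𝒜 f → SetLike.IsHomogeneousElem 𝒜 g →
        f * g ∈ 𝔭 → f ∈ 𝔭 ∨ g ∈ 𝔭) ∧
      ¬ 𝔭.IsPrime := by
  intro 𝒜 x 𝔭
  set e := (toFinsuppIso ℝ).symm
  have hx : e x = X := by
    rw [toFinsuppIso_symm_apply, ofFinsupp_single, monomial_one_one_eq_X]
  have hmem (f : AddMonoidAlgebra ℝ ℕ) : f ∈ 𝔭 ↔ X ^ 2 - 1 ∣ e f := by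
    rw [Ideal.mem_span_singleton, ← map_dvd_iff e, map_sub, map_mul, hx, map_one, sq]
  have h2 : IsUnit (2 : ℝ) := isUnit_iff_ne_zero.mpr two_ne_zero
  refine ⟨?_, ?_, ?_, ?_⟩
  · rw [Ideal.ne_top_iff_one, hmem, map_one, X_sq_sub_one_dvd_iff h2]
    simp
  · refine Ideal.homogeneous_span 𝒜 _ fun y hy => ⟨0, ?_⟩
    rw [Set.mem_singleton_iff.mp hy, AddMonoidAlgebra.single_mul_single, one_mul]
    exact Submodule.sub_mem _ (AddMonoidAlgebra.single_mem_gradeBy _ 2 1)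
      (AddMonoidAlgebra.single_mem_gradeBy _ 0 1)
  · intro f g hf hg hfg
    rw [hmem, map_mul] at hfg
    rw [hmem, hmem]
    exact X_sq_sub_one_dvd_or_of_dvd_mul h2
      (AddMonoidAlgebra.isRoot_neg_iff_of_isHomogeneousElem hf 1)
      (AddMonoidAlgebra.isRoot_neg_iff_of_isHomogeneousElem hg 1) hfg
  · intro h𝔭
    have hfac : (x - 1) * (x + 1) ∈ 𝔭 := by
      rw [show (x - 1) * (x + 1) = x * x - 1 by ring]
      exact Ideal.mem_span_singleton_self _
    rcases h𝔭.mem_or_mem hfac with h | h <;>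
      norm_num [hmem, X_sq_sub_one_dvd_iff h2, hx] at h
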